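/- Fix N ≥ 1, n_x, n_u ≥ 1, matrices A ∈ ℝ^{n_x×n_x}, B₀, B₁ ∈ ℝ^{n_x×n_u}, 0 < ρ_min ≤ ρ_max, vectors η₂, …, η_N ∈ ℝ^{n_x}, controls u₁*, …, u_{N+1}* ∈ ℝ^{n_u}, and slacks σ₂*, …, σ_N* ∈ [ρ_min, ρ_max]. Let M = B₀ + A B₁. Suppose that for each interior index i ∈ {2, …, N}, u_i* minimizes the linear function u ↦ ⟨η_i, M u⟩ over the ball {u ∈ ℝ^{n_u} : ‖u‖ ≤ σ_i*}, and suppose the set {i ∈ {2, …, N} : Mᵀη_i = 0} has cardinality at most n_x − 1. Then the set of vertices at which LCvx is violated, {i ∈ {1, …, N+1} : ¬(ρ_min ≤ ‖u_i*‖ ≤ ρ_max)}, has cardinality at most n_x + 1. (Deterministic core of the paper's main vertex theorem: given the Lagrangian-minimization characterization at interior vertices and at most n_x − 1 vanishing reduced costates, LCvx is violated at no more than n_x + 1 vertices, the two extra slots accounting for the endpoints i = 1 and i = N+1.) -/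

import Mathlib

/-!
A linear functional `u ↦ ⟪v, u⟫` with `v ≠ 0` attains its minimum over a closed ball only on the
boundary sphere, so at every interior vertex with nonvanishing reduced costate `Mᵀηᵢ` the optimal
control has norm exactly `σᵢ* ∈ [ρ_min, ρ_max]` and LCvx holds. LCvx can therefore fail only at the
two endpoints and at the at most `n_x − 1` interior vertices where `Mᵀηᵢ = 0`.
-/

open RealInnerProductSpace Matrix
open scoped Classical

/-- Matrix-vector multiplication viewed as a map between Euclidean spaces
(definitionally `Matrix.mulVec`). -/
def mulVecE {k n : ℕ} (M : Matrix (Fin k) (Fin n) ℝ)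
    (v : EuclideanSpace ℝ (Fin n)) : EuclideanSpace ℝ (Fin k) :=
  WithLp.toLp 2 (M.mulVec v)

theorem inner_mulVecE {k n : ℕ} (M : Matrix (Fin k) (Fin n) ℝ)
    (x : EuclideanSpace ℝ (Fin k)) (u : EuclideanSpace ℝ (Fin n)) :
    ⟪x, mulVecE M u⟫ = ⟪mulVecE Mᵀ x, u⟫ := by
  simp only [EuclideanSpace.inner_eq_star_dotProduct, mulVecE, star_trivial, mulVec_transpose,
    dotProduct_comm _ x.ofLp, dotProduct_mulVec]
  exact dotProduct_comm _ _

theorem norm_eq_of_forall_norm_le_inner_le {E : Type*} [NormedAddCommGroup E]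
    [InnerProductSpace ℝ E] {v u : E} {σ : ℝ} (hv : v ≠ 0) (hu : ‖u‖ ≤ σ)
    (hmin : ∀ w : E, ‖w‖ ≤ σ → ⟪v, u⟫ ≤ ⟪v, w⟫) : ‖u‖ = σ := by
  have hσ : 0 ≤ σ := (norm_nonneg u).trans hu
  have hv' : 0 < ‖v‖ := norm_pos_iff.mpr hv
  set w : E := (-σ / ‖v‖) • v
  have hw : ‖w‖ = σ := by
    rw [norm_smul, Real.norm_eq_abs, abs_div, abs_neg, abs_of_nonneg hσ, abs_norm,
      div_mul_cancel₀ _ hv'.ne']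
  have hvw : ⟪v, w⟫ = -(σ * ‖v‖) := by
    rw [real_inner_smul_right, real_inner_self_eq_norm_sq]
    field_simp
  have hlower : -(‖v‖ * ‖u‖) ≤ ⟪v, u⟫ := neg_le_of_abs_le (abs_real_inner_le_norm v u)
  have hupper : ⟪v, u⟫ ≤ -(σ * ‖v‖) := hvw ▸ hmin w hw.le
  refine le_antisymm hu (le_of_mul_le_mul_left ?_ hv')
  linarith

theorem card_filter_Icc_le_card_filter_interior_add_two (N : ℕ) {p q : ℕ → Prop}
    [DecidablePred p] [DecidablePred q] (h : ∀ i ∈ Finset.Icc 2 N, p i → q i) :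
    ((Finset.Icc 1 (N + 1)).filter p).card ≤ ((Finset.Icc 2 N).filter q).card + 2 := by
  have hsub : (Finset.Icc 1 (N + 1)).filter p ⊆
      insert 1 (insert (N + 1) ((Finset.Icc 2 N).filter q)) := by
    intro i hi
    simp only [Finset.mem_filter, Finset.mem_Icc, Finset.mem_insert] at hi ⊢
    by_cases hint : 2 ≤ i ∧ i ≤ N
    · exact Or.inr (Or.inr ⟨hint, h i (Finset.mem_Icc.mpr hint) hi.2⟩)
    · omega
  calc ((Finset.Icc 1 (N + 1)).filter p).card
      ≤ (insert 1 (insert (N + 1) ((Finset.Icc 2 N).filter q))).card := Finset.card_le_card hsub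
    _ ≤ ((Finset.Icc 2 N).filter q).card + 2 :=
      (Finset.card_insert_le _ _).trans (Nat.add_le_add_right (Finset.card_insert_le _ _) 1)

theorem stmt_14_general (N nx nu : ℕ) (hnx : 1 ≤ nx)
    (ρmin ρmax : ℝ)
    (η : ℕ → EuclideanSpace ℝ (Fin nx))
    (ustar : ℕ → EuclideanSpace ℝ (Fin nu))
    (σstar : ℕ → ℝ)
    (hσ : ∀ i ∈ Finset.Icc 2 N, ρmin ≤ σstar i ∧ σstar i ≤ ρmax)
    (M : Matrix (Fin nx) (Fin nu) ℝ)
    (hmin : ∀ i ∈ Finset.Icc 2 N, ‖ustar i‖ ≤ σstar i ∧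
      ∀ w : EuclideanSpace ℝ (Fin nu), ‖w‖ ≤ σstar i →
        ⟪η i, mulVecE M (ustar i)⟫ ≤ ⟪η i, mulVecE M w⟫)
    (hzero : ((Finset.Icc 2 N).filter (fun i => mulVecE Mᵀ (η i) = 0)).card ≤ nx - 1) :
    ((Finset.Icc 1 (N + 1)).filter
      (fun i => ¬(ρmin ≤ ‖ustar i‖ ∧ ‖ustar i‖ ≤ ρmax))).card ≤ nx + 1 := by
  have hinterior : ∀ i ∈ Finset.Icc 2 N, ¬(ρmin ≤ ‖ustar i‖ ∧ ‖ustar i‖ ≤ ρmax) →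
      mulVecE Mᵀ (η i) = 0 := by
    intro i hi hviolated
    by_contra hv
    obtain ⟨hu, hopt⟩ := hmin i hi
    have hnorm : ‖ustar i‖ = σstar i :=
      norm_eq_of_forall_norm_le_inner_le hv hu fun w hw => by
        simpa only [inner_mulVecE] using hopt w hw
    exact hviolated (hnorm ▸ hσ i hi)
  have := card_filter_Icc_le_card_filter_interior_add_two N hinterior
  omega

/-- Deterministic core of the main vertex theorem: if at each interior vertex
`i ∈ {2, …, N}` the control `uᵢ*` minimizes `u ↦ ⟨ηᵢ, (B₀ + A B₁) u⟩` over the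
ball of radius `σᵢ* ∈ [ρ_min, ρ_max]`, and `(B₀ + A B₁)ᵀηᵢ = 0` holds for at
most `n_x − 1` interior vertices, then LCvx is violated at no more than
`n_x + 1` of the vertices `1, …, N+1`. -/
theorem stmt_14 (N nx nu : ℕ) (hN : 1 ≤ N) (hnx : 1 ≤ nx) (hnu : 1 ≤ nu)
    (A : Matrix (Fin nx) (Fin nx) ℝ) (B0 B1 : Matrix (Fin nx) (Fin nu) ℝ)
    (ρmin ρmax : ℝ) (hρ0 : 0 < ρmin) (hρ : ρmin ≤ ρmax)
    (η : ℕ → EuclideanSpace ℝ (Fin nx))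
    (ustar : ℕ → EuclideanSpace ℝ (Fin nu))
    (σstar : ℕ → ℝ)
    (hσ : ∀ i ∈ Finset.Icc 2 N, ρmin ≤ σstar i ∧ σstar i ≤ ρmax)
    (M : Matrix (Fin nx) (Fin nu) ℝ) (hM : M = B0 + A * B1)
    (hmin : ∀ i ∈ Finset.Icc 2 N, ‖ustar i‖ ≤ σstar i ∧
      ∀ w : EuclideanSpace ℝ (Fin nu), ‖w‖ ≤ σstar i →
        ⟪η i, mulVecE M (ustar i)⟫ ≤ ⟪η i, mulVecE M w⟫)
    (hzero : ((Finset.Icc 2 N).filter (fun i => mulVecE Mᵀ (η i) = 0)).card ≤ nx - 1) :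
    ((Finset.Icc 1 (N + 1)).filter
      (fun i => ¬(ρmin ≤ ‖ustar i‖ ∧ ‖ustar i‖ ≤ ρmax))).card ≤ nx + 1 :=
  stmt_14_general N nx nu hnx ρmin ρmax η ustar σstar hσ M hmin hzero
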